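/- arXiv:2210.09903 — 6 statements merged into one kernel-verified Lean document; each statement's English description precedes it below -/
import Mathlib

section
/- Suppose the instance (𝒳, ℋ, A, B) follows linear sequence dynamics with the ξ-weighted p-norm for some p ≥ 1, and suppose Σ_{k=0}^∞ ‖A^k‖^p < ∞. If f : ℋ → ℝ is L-Lipschitz continuous, then for every t ≥ 1 the function f̄(x) = f(Σ_{k=0}^{t-1} A^k B x) is Lipschitz continuous on 𝒳 with constant L · (Σ_{k=0}^∞ ‖A^k‖^p)^{1/p}. -/
/-!
The coordinates of `∑_{k<t} Aᵏ B z` are decoupled: `Aᵏ B z` lives in the `k`-th coordinate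
alone, so the `k`-th coordinate of the sum is that of `Aᵏ B z`, whose weighted norm is at most
`‖Aᵏ B z‖ ≤ ‖Aᵏ‖ ‖z‖`. Summing `p`-th powers gives `‖∑_{k<t} Aᵏ B z‖ ≤ (∑ₖ ‖Aᵏ‖ᵖ)^{1/p} ‖z‖`,
and the Lipschitz bound follows from linearity and the Lipschitz continuity of `f`.
-/

section LinearSequenceDynamics

variable {W H : Type*} [NormedAddCommGroup W] [NormedSpace ℝ W]
  [NormedAddCommGroup H] [NormedSpace ℝ H] {coord : ℕ → H →ₗ[ℝ] W}

theorem rpow_norm_eq_tsum {p : ℝ} (hp : 0 < p) {xi : ℕ → ℝ} (hxi : ∀ i, 0 ≤ xi i)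
    (hnorm : ∀ y : H, ‖y‖ = (∑' i : ℕ, (xi i * ‖coord i y‖) ^ p) ^ (1 / p)) (y : H) :
    ‖y‖ ^ p = ∑' i : ℕ, (xi i * ‖coord i y‖) ^ p := by
  rw [hnorm y, one_div, Real.rpow_inv_rpow _ hp.ne']
  exact tsum_nonneg fun i => Real.rpow_nonneg (mul_nonneg (hxi i) (norm_nonneg _)) p

theorem weight_mul_norm_coord_le {p : ℝ} (hp : 0 < p) {xi : ℕ → ℝ} (hxi : ∀ i, 0 ≤ xi i)
    (hsummable : ∀ y : H, Summable fun i : ℕ => (xi i * ‖coord i y‖) ^ p)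
    (hnorm : ∀ y : H, ‖y‖ = (∑' i : ℕ, (xi i * ‖coord i y‖) ^ p) ^ (1 / p))
    (i : ℕ) (y : H) : xi i * ‖coord i y‖ ≤ ‖y‖ := by
  have hterm_nonneg : ∀ j, 0 ≤ xi j * ‖coord j y‖ := fun j => mul_nonneg (hxi j) (norm_nonneg _)
  rw [← Real.rpow_le_rpow_iff (hterm_nonneg i) (norm_nonneg y) hp,
    rpow_norm_eq_tsum hp hxi hnorm]
  exact (hsummable y).le_tsum i fun j _ => Real.rpow_nonneg (hterm_nonneg j) p

variable {A : H →L[ℝ] H} {B : W →L[ℝ] H} {Aops : ℕ → W →L[ℝ] W}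

theorem coord_pow_apply_eq_zero_of_ne
    (hA0 : ∀ y : H, coord 0 (A y) = 0)
    (hAsucc : ∀ (y : H) (i : ℕ), coord (i + 1) (A y) = Aops i (coord i y))
    (hBsucc : ∀ (x : W) (i : ℕ), coord (i + 1) (B x) = 0) :
    ∀ (k i : ℕ) (z : W), i ≠ k → coord i ((A ^ k) (B z)) = 0
  | 0, j + 1, z, _ => hBsucc z j
  | k + 1, 0, z, _ => by rw [pow_succ', mul_apply_eq_comp, hA0]
  | k + 1, j + 1, z, hjk => by
    rw [pow_succ', mul_apply_eq_comp, hAsucc,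
      coord_pow_apply_eq_zero_of_ne hA0 hAsucc hBsucc k j z (by omega), map_zero]

theorem coord_sum_pow_apply
    (hA0 : ∀ y : H, coord 0 (A y) = 0)
    (hAsucc : ∀ (y : H) (i : ℕ), coord (i + 1) (A y) = Aops i (coord i y))
    (hBsucc : ∀ (x : W) (i : ℕ), coord (i + 1) (B x) = 0) (t i : ℕ) (z : W) :
    coord i (∑ k ∈ Finset.range t, (A ^ k) (B z)) =
      if i < t then coord i ((A ^ i) (B z)) else 0 := by
  have hvanish := coord_pow_apply_eq_zero_of_ne hA0 hAsucc hBsucc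
  rw [map_sum]
  split_ifs with hi
  · exact Finset.sum_eq_single_of_mem i (Finset.mem_range.2 hi)
      fun k _ hk => hvanish k i z (Ne.symm hk)
  · exact Finset.sum_eq_zero fun k hk =>
      hvanish k i z fun hik => hi (hik ▸ Finset.mem_range.1 hk)

theorem norm_sum_pow_apply_le (hB : ‖B‖ ≤ 1) {p : ℝ} (hp : 0 < p)
    {xi : ℕ → ℝ} (hxi : ∀ i, 0 ≤ xi i)
    (hsummable : ∀ y : H, Summable fun i : ℕ => (xi i * ‖coord i y‖) ^ p)
    (hnorm : ∀ y : H, ‖y‖ = (∑' i : ℕ, (xi i * ‖coord i y‖) ^ p) ^ (1 / p))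
    (hA0 : ∀ y : H, coord 0 (A y) = 0)
    (hAsucc : ∀ (y : H) (i : ℕ), coord (i + 1) (A y) = Aops i (coord i y))
    (hBsucc : ∀ (x : W) (i : ℕ), coord (i + 1) (B x) = 0)
    (hAsum : Summable fun k : ℕ => ‖A ^ k‖ ^ p) (t : ℕ) (z : W) :
    ‖∑ k ∈ Finset.range t, (A ^ k) (B z)‖ ≤ (∑' k : ℕ, ‖A ^ k‖ ^ p) ^ (1 / p) * ‖z‖ := by
  set S := ∑ k ∈ Finset.range t, (A ^ k) (B z)
  set C := ∑' k : ℕ, ‖A ^ k‖ ^ p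
  have hC : 0 ≤ C := tsum_nonneg fun k => Real.rpow_nonneg (norm_nonneg _) p
  have hcoord_le : ∀ i, xi i * ‖coord i S‖ ≤ ‖A ^ i‖ * ‖z‖ := by
    intro i
    rw [coord_sum_pow_apply hA0 hAsucc hBsucc]
    split_ifs
    · calc xi i * ‖coord i ((A ^ i) (B z))‖ ≤ ‖(A ^ i) (B z)‖ :=
            weight_mul_norm_coord_le hp hxi hsummable hnorm i _
        _ ≤ ‖A ^ i‖ * ‖B z‖ := (A ^ i).le_opNorm _
        _ ≤ ‖A ^ i‖ * ‖z‖ := by gcongr; simpa using B.le_of_opNorm_le hB z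
    · simp only [norm_zero, mul_zero]
      positivity
  have hrpow_le : ‖S‖ ^ p ≤ C * ‖z‖ ^ p := by
    rw [rpow_norm_eq_tsum hp hxi hnorm, ← tsum_mul_right]
    refine (hsummable S).tsum_le_tsum (fun i => ?_) (hAsum.mul_right _)
    rw [← Real.mul_rpow (norm_nonneg _) (norm_nonneg _)]
    exact Real.rpow_le_rpow (mul_nonneg (hxi i) (norm_nonneg _)) (hcoord_le i) hp.le
  rwa [← Real.rpow_le_rpow_iff (norm_nonneg S) (by positivity) hp,
    Real.mul_rpow (by positivity) (norm_nonneg z), one_div, Real.rpow_inv_rpow hC hp.ne']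

end LinearSequenceDynamics

theorem stmt_1_general
    {W : Type*} [NormedAddCommGroup W] [InnerProductSpace ℝ W]
    {H : Type*} [NormedAddCommGroup H] [NormedSpace ℝ H]
    (X : Set W)
    (A : H →L[ℝ] H) (B : W →L[ℝ] H) (hB : ‖B‖ ≤ 1)
    (p : ℝ) (hp : 1 ≤ p)
    (xi : ℕ → ℝ) (hxi : ∀ i, 0 ≤ xi i)
    (coord : ℕ → H →ₗ[ℝ] W) (Aops : ℕ → W →L[ℝ] W)
    (hsummable : ∀ y : H, Summable fun i : ℕ => (xi i * ‖coord i y‖) ^ p)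
    (hnorm : ∀ y : H, ‖y‖ = (∑' i : ℕ, (xi i * ‖coord i y‖) ^ p) ^ (1 / p))
    (hA0 : ∀ y : H, coord 0 (A y) = 0)
    (hAsucc : ∀ (y : H) (i : ℕ), coord (i + 1) (A y) = Aops i (coord i y))
    (hBsucc : ∀ (x : W) (i : ℕ), coord (i + 1) (B x) = 0)
    (L : ℝ) (hL : 0 ≤ L)
    (hAsum : Summable fun k : ℕ => ‖A ^ k‖ ^ p)
    (f : H → ℝ) (hf : ∀ a b : H, |f a - f b| ≤ L * ‖a - b‖)
    (t : ℕ) :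
    ∀ x ∈ X, ∀ y ∈ X,
      |f (∑ k ∈ Finset.range t, (A ^ k) (B x)) - f (∑ k ∈ Finset.range t, (A ^ k) (B y))|
        ≤ (L * (∑' k : ℕ, ‖A ^ k‖ ^ p) ^ (1 / p)) * ‖x - y‖ := by
  intro x _ y _
  calc |f (∑ k ∈ Finset.range t, (A ^ k) (B x)) - f (∑ k ∈ Finset.range t, (A ^ k) (B y))|
      ≤ L * ‖∑ k ∈ Finset.range t, (A ^ k) (B x) - ∑ k ∈ Finset.range t, (A ^ k) (B y)‖ :=
        hf _ _
    _ = L * ‖∑ k ∈ Finset.range t, (A ^ k) (B (x - y))‖ := by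
        simp only [map_sub, Finset.sum_sub_distrib]
    _ ≤ L * ((∑' k : ℕ, ‖A ^ k‖ ^ p) ^ (1 / p) * ‖x - y‖) := by
        gcongr
        exact norm_sum_pow_apply_le hB (by linarith) hxi hsummable hnorm hA0 hAsucc hBsucc
          hAsum t (x - y)
    _ = (L * (∑' k : ℕ, ‖A ^ k‖ ^ p) ^ (1 / p)) * ‖x - y‖ := (mul_assoc _ _ _).symm

/-- For an instance following linear sequence dynamics with the ξ-weighted
`p`-norm (`p ≥ 1`), if `f` is `L`-Lipschitz and `∑ₖ ‖Aᵏ‖^p < ∞`, then for every `t ≥ 1` the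
function `f̄(x) = f (∑_{k<t} Aᵏ B x)` is Lipschitz on `𝒳` with constant
`L ⬝ (∑_{k=0}^∞ ‖Aᵏ‖^p)^{1/p}`.  The linear sequence dynamics structure is encoded by
coordinate maps `coord i : ℋ →ₗ[ℝ] 𝒲` together with the weighted-`p`-norm formula and the
action of `A` and `B` on coordinates. -/
theorem stmt_1
    {W : Type*} [NormedAddCommGroup W] [InnerProductSpace ℝ W] [CompleteSpace W]
    {H : Type*} [NormedAddCommGroup H] [NormedSpace ℝ H] [CompleteSpace H]
    (X : Set W) (hXne : X.Nonempty) (hXclosed : IsClosed X) (hXconvex : Convex ℝ X)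
    (A : H →L[ℝ] H) (B : W →L[ℝ] H) (hB : ‖B‖ ≤ 1)
    (p : ℝ) (hp : 1 ≤ p)
    (xi : ℕ → ℝ) (hxi0 : xi 0 = 1) (hxi : ∀ i, 0 ≤ xi i)
    (coord : ℕ → H →ₗ[ℝ] W) (Aops : ℕ → W →L[ℝ] W)
    (hsummable : ∀ y : H, Summable fun i : ℕ => (xi i * ‖coord i y‖) ^ p)
    (hnorm : ∀ y : H, ‖y‖ = (∑' i : ℕ, (xi i * ‖coord i y‖) ^ p) ^ (1 / p))
    (hA0 : ∀ y : H, coord 0 (A y) = 0)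
    (hAsucc : ∀ (y : H) (i : ℕ), coord (i + 1) (A y) = Aops i (coord i y))
    (hB0 : ∀ x : W, coord 0 (B x) = x)
    (hBsucc : ∀ (x : W) (i : ℕ), coord (i + 1) (B x) = 0)
    (L : ℝ) (hL : 0 ≤ L)
    (hAsum : Summable fun k : ℕ => ‖A ^ k‖ ^ p)
    (f : H → ℝ) (hf : ∀ a b : H, |f a - f b| ≤ L * ‖a - b‖)
    (t : ℕ) (ht : 1 ≤ t) :
    ∀ x ∈ X, ∀ y ∈ X,
      |f (∑ k ∈ Finset.range t, (A ^ k) (B x)) - f (∑ k ∈ Finset.range t, (A ^ k) (B y))|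
        ≤ (L * (∑' k : ℕ, ‖A ^ k‖ ^ p) ^ (1 / p)) * ‖x - y‖ :=
  stmt_1_general X A B hB p hp xi hxi coord Aops hsummable hnorm hA0 hAsucc hBsucc L hL hAsum f hf t
end

section
/- Let 𝒳 be a nonempty set, let T ≥ 0, and let g_0, g_1, …, g_T : 𝒳 → ℝ. Suppose that for each t ∈ {0, 1, …, T} there exists x_{t+1} ∈ 𝒳 that minimizes the function x ↦ Σ_{s=0}^{t} g_s(x) over 𝒳. Then for every x ∈ 𝒳, Σ_{t=0}^{T} g_t(x) ≥ Σ_{t=0}^{T} g_t(x_{t+1}). -/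
/-!
By induction on `T`: the leaders' cumulative loss `∑_{t ≤ T} g_t(x_{t+1})` is at most the loss
`∑_{t ≤ T} g_t(x_{T+1})` of the final leader in hindsight, because replacing the earlier leader
`x_{T+1}` by `x_{T+2}` on the first `T + 1` rounds can only increase their sum. Minimality of
`x_{T+1}` then compares it with any competitor.
-/

open Finset

theorem sum_range_leader_le_sum_range_last_leader {α M : Type*} [AddCommMonoid M] [Preorder M]
    [IsOrderedAddMonoid M] {X : Set α} {g : ℕ → α → M} {x : ℕ → α} {T : ℕ}
    (hmem : ∀ t ≤ T, x (t + 1) ∈ X)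
    (hmin : ∀ t ≤ T, IsMinOn (fun y ↦ ∑ s ∈ range (t + 1), g s y) X (x (t + 1))) :
    ∑ t ∈ range (T + 1), g t (x (t + 1)) ≤ ∑ t ∈ range (T + 1), g t (x (T + 1)) := by
  induction T with
  | zero => rfl
  | succ T ih =>
    have ih := ih (fun t ht ↦ hmem t (ht.trans T.le_succ)) (fun t ht ↦ hmin t (ht.trans T.le_succ))
    have hswap : ∑ t ∈ range (T + 1), g t (x (T + 1)) ≤ ∑ t ∈ range (T + 1), g t (x (T + 2)) :=
      hmin T T.le_succ (hmem (T + 1) le_rfl)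
    rw [sum_range_succ, sum_range_succ _ (T + 1)]
    exact add_le_add_left (ih.trans hswap) _

theorem stmt_3_general
    {α : Type*} (X : Set α) (T : ℕ)
    (g : ℕ → α → ℝ) (x : ℕ → α)
    (hmin : ∀ t ≤ T, x (t + 1) ∈ X ∧
      ∀ y ∈ X, ∑ s ∈ Finset.range (t + 1), g s (x (t + 1)) ≤ ∑ s ∈ Finset.range (t + 1), g s y) :
    ∀ y ∈ X, ∑ t ∈ Finset.range (T + 1), g t y ≥ ∑ t ∈ Finset.range (T + 1), g t (x (t + 1)) := by
  intro y hy
  have hleader := sum_range_leader_le_sum_range_last_leader (fun t ht ↦ (hmin t ht).1)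
    (fun t ht ↦ isMinOn_iff.mpr (hmin t ht).2)
  exact hleader.trans ((hmin T le_rfl).2 y hy)

/-- be-the-leader lemma. If for each `t ∈ {0, …, T}` the point `x (t+1) ∈ 𝒳`
minimizes `x ↦ ∑_{s=0}^{t} g s x` over `𝒳`, then for every `y ∈ 𝒳`,
`∑_{t=0}^{T} g t y ≥ ∑_{t=0}^{T} g t (x (t+1))`. -/
theorem stmt_3
    {α : Type*} (X : Set α) (hX : X.Nonempty) (T : ℕ)
    (g : ℕ → α → ℝ) (x : ℕ → α)
    (hmin : ∀ t ≤ T, x (t + 1) ∈ X ∧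
      ∀ y ∈ X, ∑ s ∈ Finset.range (t + 1), g s (x (t + 1)) ≤ ∑ s ∈ Finset.range (t + 1), g s y) :
    ∀ y ∈ X, ∑ t ∈ Finset.range (T + 1), g t y ≥ ∑ t ∈ Finset.range (T + 1), g t (x (t + 1)) :=
  stmt_3_general X T g x hmin
end

section
/- Let 𝒳 be a nonempty closed convex subset of a real Hilbert space, let g_1, …, g_T : 𝒳 → ℝ be convex and L_g-Lipschitz continuous, let R : 𝒳 → ℝ be α-strongly convex (α > 0) with |R(x) − R(x̃)| ≤ D for all x, x̃ ∈ 𝒳, and let η > 0. Suppose for each t ∈ {1, …, T} the point x_t ∈ 𝒳 minimizes x ↦ Σ_{s=1}^{t-1} g_s(x) + R(x)/η over 𝒳 (with such minimizers existing, including x_{T+1}). Then: (i) ‖x_{t+1} − x_t‖ ≤ η L_g / α for all t ∈ {1, …, T}; and (ii) Σ_{t=1}^{T} g_t(x_t) − inf_{x ∈ 𝒳} Σ_{t=1}^{T} g_t(x) ≤ D/η + η T L_g² / α. -/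
/-!
Every FTRL objective `∑_{s ≤ n} g_s + R / η` is `α / η`-strongly convex, hence grows quadratically
away from its minimizer. Comparing the growth of two consecutive objectives, which differ by the
`L_g`-Lipschitz loss `g_{n+1}`, bounds the move of the minimizer by `η L_g / α`. For the regret,
the be-the-leader inequality `R(x_1)/η + ∑ g_t(x_{t+1}) ≤ R(y)/η + ∑ g_t(y)`
leaves the oscillation `D / η` of the regularizer plus `T` terms `g_t(x_t) - g_t(x_{t+1})`,
each at most `L_g · η L_g / α` by stability.
-/

open Finset Filter Topology

section FTRL

variable {A : Type*} {X : Set A} {g : ℕ → A → ℝ} {r : A → ℝ} {x : ℕ → A}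

def ftrlObjective (g : ℕ → A → ℝ) (r : A → ℝ) (n : ℕ) (y : A) : ℝ :=
  ∑ s ∈ Icc 1 n, g s y + r y

@[simp]
lemma ftrlObjective_zero : ftrlObjective g r 0 = r := by
  ext y
  simp [ftrlObjective]

lemma ftrlObjective_succ (n : ℕ) :
    ftrlObjective g r (n + 1) = ftrlObjective g r n + g (n + 1) := by
  ext y
  simp only [ftrlObjective, Pi.add_apply, sum_Icc_succ_top (Nat.le_add_left 1 n)]
  ring

lemma add_sum_le_ftrlObjective_of_isMinOn {N : ℕ}
    (hmin : ∀ n ≤ N, IsMinOn (ftrlObjective g r n) X (x (n + 1)))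
    (hmem : ∀ n ≤ N, x (n + 1) ∈ X) {y : A} (hy : y ∈ X) :
    r (x 1) + ∑ t ∈ Icc 1 N, g t (x (t + 1)) ≤ ftrlObjective g r N y := by
  induction N generalizing y with
  | zero => simpa using isMinOn_iff.1 (hmin 0 le_rfl) y hy
  | succ N ih =>
    calc r (x 1) + ∑ t ∈ Icc 1 (N + 1), g t (x (t + 1))
        = (r (x 1) + ∑ t ∈ Icc 1 N, g t (x (t + 1))) + g (N + 1) (x (N + 2)) := by
          rw [sum_Icc_succ_top (Nat.le_add_left 1 N)]
          ring
      _ ≤ ftrlObjective g r N (x (N + 2)) + g (N + 1) (x (N + 2)) := by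
          gcongr
          exact ih (fun n hn ↦ hmin n (by omega)) (fun n hn ↦ hmem n (by omega))
            (hmem (N + 1) le_rfl)
      _ = ftrlObjective g r (N + 1) (x (N + 2)) := by rw [ftrlObjective_succ, Pi.add_apply]
      _ ≤ ftrlObjective g r (N + 1) y := isMinOn_iff.1 (hmin (N + 1) le_rfl) y hy

lemma sum_sub_sum_le_of_isMinOn_ftrlObjective {N : ℕ}
    (hmin : ∀ n ≤ N, IsMinOn (ftrlObjective g r n) X (x (n + 1)))
    (hmem : ∀ n ≤ N, x (n + 1) ∈ X) {y : A} (hy : y ∈ X) :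
    ∑ t ∈ Icc 1 N, g t (x t) - ∑ t ∈ Icc 1 N, g t y
      ≤ r y - r (x 1) + ∑ t ∈ Icc 1 N, (g t (x t) - g t (x (t + 1))) := by
  have h := add_sum_le_ftrlObjective_of_isMinOn hmin hmem hy
  rw [ftrlObjective] at h
  rw [sum_sub_distrib]
  linarith

end FTRL

section StrongConvex

variable {E : Type*} [NormedAddCommGroup E] [NormedSpace ℝ E] {s : Set E} {m : ℝ} {f h : E → ℝ}

lemma StrongConvexOn.add_convexOn (hf : StrongConvexOn s m f) (hh : ConvexOn ℝ s h) :
    StrongConvexOn s m (f + h) := by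
  have hfh := hf.add hh.uniformConvexOn_zero
  rwa [add_zero] at hfh

lemma StrongConvexOn.div_const (hf : StrongConvexOn s m f) {c : ℝ} (hc : 0 < c) :
    StrongConvexOn s (m / c) fun x ↦ f x / c := by
  refine ⟨hf.1, fun x hx y hy a b ha hb hab ↦ ?_⟩
  have h := div_le_div_of_nonneg_right (hf.2 hx hy ha hb hab) hc.le
  simp only [smul_eq_mul] at h ⊢
  refine h.trans_eq ?_
  ring

lemma StrongConvexOn.add_mul_sq_norm_sub_le_of_isMinOn (hf : StrongConvexOn s m f) {z y : E}
    (hmin : IsMinOn f s z) (hz : z ∈ s) (hy : y ∈ s) :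
    f z + m / 2 * ‖y - z‖ ^ 2 ≤ f y := by
  -- Compare `f z` with `f (l • y + (1 - l) • z)` and let `l → 0`.
  have hseg : ∀ l ∈ Set.Ioo (0 : ℝ) 1, (1 - l) * (m / 2 * ‖y - z‖ ^ 2) ≤ f y - f z := by
    rintro l ⟨hl0, hl1⟩
    have hconv := hf.2 hy hz hl0.le (sub_nonneg.2 hl1.le) (add_sub_cancel l 1)
    have hle := isMinOn_iff.1 hmin _ (hf.1 hy hz hl0.le (sub_nonneg.2 hl1.le) (add_sub_cancel l 1))
    simp only [smul_eq_mul] at hconv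
    refine le_of_mul_le_mul_left ?_ hl0
    linear_combination hle + hconv
  have hlim : Tendsto (fun l : ℝ ↦ (1 - l) * (m / 2 * ‖y - z‖ ^ 2)) (𝓝[>] 0)
      (𝓝 (m / 2 * ‖y - z‖ ^ 2)) := by
    have : Continuous fun l : ℝ ↦ (1 - l) * (m / 2 * ‖y - z‖ ^ 2) := by fun_prop
    simpa using this.continuousWithinAt (s := Set.Ioi 0) (x := 0) |>.tendsto
  have := le_of_tendsto hlim (by filter_upwards [Ioo_mem_nhdsGT one_pos] using hseg)
  linarith

lemma StrongConvexOn.norm_sub_le_of_isMinOn_add (hf : StrongConvexOn s m f) (hh : ConvexOn ℝ s h)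
    (hm : 0 < m) {L : ℝ} (hL : 0 ≤ L) (hlip : ∀ a ∈ s, ∀ b ∈ s, |h a - h b| ≤ L * ‖a - b‖)
    {z z' : E} (hz : IsMinOn f s z) (hzs : z ∈ s) (hz' : IsMinOn (f + h) s z') (hz's : z' ∈ s) :
    ‖z' - z‖ ≤ L / m := by
  have hgrow := hf.add_mul_sq_norm_sub_le_of_isMinOn hz hzs hz's
  have hgrow' := (hf.add_convexOn hh).add_mul_sq_norm_sub_le_of_isMinOn hz' hz's hzs
  have hhL : h z - h z' ≤ L * ‖z' - z‖ := by
    rw [norm_sub_rev]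
    exact (le_abs_self _).trans (hlip z hzs z' hz's)
  rw [norm_sub_rev, Pi.add_apply, Pi.add_apply] at hgrow'
  have hsq : m * ‖z' - z‖ * ‖z' - z‖ ≤ L * ‖z' - z‖ := by linarith
  rw [le_div_iff₀ hm]
  rcases (norm_nonneg (z' - z)).eq_or_lt with h0 | h0
  · rw [← h0, zero_mul]
    exact hL
  · rw [mul_comm]
    exact le_of_mul_le_mul_right hsq h0

lemma strongConvexOn_ftrlObjective {g : ℕ → E → ℝ} {r : E → ℝ} (hr : StrongConvexOn s m r)
    {N : ℕ} (hg : ∀ t, 1 ≤ t → t ≤ N → ConvexOn ℝ s (g t)) :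
    StrongConvexOn s m (ftrlObjective g r N) := by
  induction N with
  | zero => simpa using hr
  | succ N ih =>
    rw [ftrlObjective_succ]
    exact (ih fun t h1 h2 ↦ hg t h1 (by omega)).add_convexOn (hg (N + 1) (by omega) le_rfl)

lemma norm_sub_le_of_isMinOn_ftrlObjective {g : ℕ → E → ℝ} {r : E → ℝ} {n : ℕ}
    (hr : StrongConvexOn s m r) (hm : 0 < m) (hg : ∀ t, 1 ≤ t → t ≤ n + 1 → ConvexOn ℝ s (g t))
    {L : ℝ} (hL : 0 ≤ L) (hlip : ∀ a ∈ s, ∀ b ∈ s, |g (n + 1) a - g (n + 1) b| ≤ L * ‖a - b‖)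
    {z z' : E} (hz : IsMinOn (ftrlObjective g r n) s z) (hzs : z ∈ s)
    (hz' : IsMinOn (ftrlObjective g r (n + 1)) s z') (hz's : z' ∈ s) :
    ‖z' - z‖ ≤ L / m := by
  rw [ftrlObjective_succ] at hz'
  have hΦ := strongConvexOn_ftrlObjective (N := n) hr fun t h1 h2 ↦ hg t h1 (by omega)
  exact hΦ.norm_sub_le_of_isMinOn_add (hg (n + 1) (by omega) le_rfl) hm hL hlip hz hzs hz' hz's

end StrongConvex

theorem stmt_4_general
    {E : Type*} [NormedAddCommGroup E] [InnerProductSpace ℝ E]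
    (X : Set E)
    (T : ℕ) (g : ℕ → E → ℝ) (Lg : ℝ) (hLg : 0 ≤ Lg)
    (hconv : ∀ t, 1 ≤ t → t ≤ T → ConvexOn ℝ X (g t))
    (hlip : ∀ t, 1 ≤ t → t ≤ T → ∀ a ∈ X, ∀ b ∈ X, |g t a - g t b| ≤ Lg * ‖a - b‖)
    (R : E → ℝ) (α : ℝ) (hα : 0 < α) (hR : StrongConvexOn X α R)
    (D : ℝ) (hD : ∀ a ∈ X, ∀ b ∈ X, |R a - R b| ≤ D)
    (η : ℝ) (hη : 0 < η)
    (x : ℕ → E)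
    (hx : ∀ t, 1 ≤ t → t ≤ T + 1 → x t ∈ X ∧
      ∀ y ∈ X, (∑ s ∈ Finset.Icc 1 (t - 1), g s (x t)) + R (x t) / η
        ≤ (∑ s ∈ Finset.Icc 1 (t - 1), g s y) + R y / η) :
    (∀ t, 1 ≤ t → t ≤ T → ‖x (t + 1) - x t‖ ≤ η * Lg / α) ∧
    (∀ y ∈ X, (∑ t ∈ Finset.Icc 1 T, g t (x t)) - (∑ t ∈ Finset.Icc 1 T, g t y)
      ≤ D / η + η * T * Lg ^ 2 / α) := by
  have hmem (n : ℕ) (hn : n ≤ T) : x (n + 1) ∈ X := (hx (n + 1) (by omega) (by omega)).1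
  have hmin (n : ℕ) (hn : n ≤ T) :
      IsMinOn (ftrlObjective g (fun y ↦ R y / η) n) X (x (n + 1)) :=
    isMinOn_iff.2 (hx (n + 1) (by omega) (by omega)).2
  have hstable : ∀ t, 1 ≤ t → t ≤ T → ‖x (t + 1) - x t‖ ≤ η * Lg / α := by
    rintro (_ | n) ht hn
    · omega
    have h := norm_sub_le_of_isMinOn_ftrlObjective (hR.div_const hη) (by positivity)
      (fun t h1 h2 ↦ hconv t h1 (by omega)) hLg (hlip (n + 1) ht hn)
      (hmin n (by omega)) (hmem n (by omega)) (hmin (n + 1) hn) (hmem (n + 1) hn)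
    rwa [div_div_eq_mul_div, mul_comm Lg] at h
  refine ⟨hstable, fun y hy ↦ ?_⟩
  have hstep : ∀ t ∈ Icc 1 T, g t (x t) - g t (x (t + 1)) ≤ η * Lg ^ 2 / α := by
    intro t ht
    obtain ⟨h1, hT⟩ := mem_Icc.1 ht
    calc g t (x t) - g t (x (t + 1))
        ≤ Lg * ‖x (t + 1) - x t‖ := by
          rw [norm_sub_rev]
          exact (le_abs_self _).trans
            (hlip t h1 hT _ (hx t h1 (by omega)).1 _ (hmem t hT))
      _ ≤ Lg * (η * Lg / α) := by gcongr; exact hstable t h1 hT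
      _ = η * Lg ^ 2 / α := by ring
  have hR1 : R y / η - R (x 1) / η ≤ D / η := by
    rw [← sub_div]
    gcongr
    exact (le_abs_self _).trans (hD y hy _ (hmem 0 T.zero_le))
  calc (∑ t ∈ Icc 1 T, g t (x t)) - ∑ t ∈ Icc 1 T, g t y
      ≤ (R y / η - R (x 1) / η) + ∑ t ∈ Icc 1 T, (g t (x t) - g t (x (t + 1))) :=
        sum_sub_sum_le_of_isMinOn_ftrlObjective hmin hmem hy
    _ ≤ D / η + ∑ _t ∈ Icc 1 T, η * Lg ^ 2 / α := add_le_add hR1 (sum_le_sum hstep)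
    _ = D / η + η * T * Lg ^ 2 / α := by
      rw [sum_const, Nat.card_Icc, nsmul_eq_mul, Nat.add_sub_cancel]
      ring

/-- standard FTRL analysis. For convex `L_g`-Lipschitz losses `g_1, …, g_T` on a
nonempty closed convex subset `𝒳` of a real Hilbert space, an `α`-strongly convex regularizer `R`
with oscillation at most `D` on `𝒳`, and FTRL iterates `x_t` with step size `η > 0`:
(i) consecutive iterates satisfy `‖x_{t+1} − x_t‖ ≤ η L_g / α`, and
(ii) the static regret is at most `D/η + η T L_g² / α`. -/
theorem stmt_4
    {E : Type*} [NormedAddCommGroup E] [InnerProductSpace ℝ E] [CompleteSpace E]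
    (X : Set E) (hXne : X.Nonempty) (hXclosed : IsClosed X) (hXconvex : Convex ℝ X)
    (T : ℕ) (g : ℕ → E → ℝ) (Lg : ℝ) (hLg : 0 ≤ Lg)
    (hconv : ∀ t, 1 ≤ t → t ≤ T → ConvexOn ℝ X (g t))
    (hlip : ∀ t, 1 ≤ t → t ≤ T → ∀ a ∈ X, ∀ b ∈ X, |g t a - g t b| ≤ Lg * ‖a - b‖)
    (R : E → ℝ) (α : ℝ) (hα : 0 < α) (hR : StrongConvexOn X α R)
    (D : ℝ) (hD : ∀ a ∈ X, ∀ b ∈ X, |R a - R b| ≤ D)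
    (η : ℝ) (hη : 0 < η)
    (x : ℕ → E)
    (hx : ∀ t, 1 ≤ t → t ≤ T + 1 → x t ∈ X ∧
      ∀ y ∈ X, (∑ s ∈ Finset.Icc 1 (t - 1), g s (x t)) + R (x t) / η
        ≤ (∑ s ∈ Finset.Icc 1 (t - 1), g s y) + R y / η) :
    (∀ t, 1 ≤ t → t ≤ T → ‖x (t + 1) - x t‖ ≤ η * Lg / α) ∧
    (∀ y ∈ X, (∑ t ∈ Finset.Icc 1 T, g t (x t)) - (∑ t ∈ Finset.Icc 1 T, g t y)
      ≤ D / η + η * T * Lg ^ 2 / α) :=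
  stmt_4_general X T g Lg hLg hconv hlip R α hα hR D hD η hη x hx
end

section
/- Let p ≥ 1, L > 0, and let m ≥ 1 and N ≥ 2 be integers with T = N·m. Take 𝒳 = [−1,1] ⊆ ℝ and the OCO with finite memory instance with memory length m and the p-norm, so h_t = (x_t, x_{t−1}, …, x_{t−m+1}) (with x_s = 0 for s ≤ 0). For each sign vector ε ∈ {−1,+1}^N define losses f_t^ε : ℝ^m → ℝ by: f_t^ε = 0 for t ≤ m; and for t > m lying in block n (i.e., (n−1)m < t ≤ nm), f_t^ε(h_t) = ε_n · L · m^{(1−p)/p} · (x_{t−m+1} + x_{t−m+2} + ⋯ + x_{(n−1)m+1}), i.e. the linear functional summing the coordinates of the history from its oldest entry up to and including the decision made in the first round of block n, scaled by ε_n L m^{(1−p)/p}. (Each f_t^ε is linear, hence convex, and is L-Lipschitz in the ℓ^p norm on ℝ^m.) Then there is an absolute constant c > 0 such that for every adaptive algorithm — every family of functions x_t : {−1,+1}^N → [−1,1] (t = 1, …, T) such that x_t(ε) depends only on ε_1, …, ε_{⌈(t−1)/m⌉} — the expected policy regret satisfies E_{ε uniform on {−1,+1}^N}[ Σ_{t=1}^{T}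 f_t^ε(h_t(ε)) − min_{x ∈ [−1,1]} Σ_{t=1}^{T} f̄_t^ε(x) ] ≥ c · L · √(T · m^{(p+2)/p}). -/
/-!
The losses are linear in the history, so the total loss of the constant decision `y` under the
sign vector `ε` is `C · S · y`, where `C = L m^{(1-p)/p} m(m+1)/2` and `S = ε₂ + ⋯ + ε_N` is a
Rademacher sum; the best constant decision therefore has loss `-C |S|`. The loss of a round in
block `n` only reads decisions made up to the first round of block `n`, which do not depend on
`ε_n`; flipping `ε_n` negates it, so the algorithm's expected loss is `0`. The expected regret
is thus `C · E|S|`, and the Khintchine-type bound `E|S| ≥ √((N-1)/3)`, obtained from the second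
and fourth moments of `S`, gives the claim with `c = 1/5`.
-/

/-- The adversarial loss value for the finite-memory lower bound.  For `t ≤ m` the loss is `0`.
For `t > m` lying in block `n = ⌈t/m⌉` (0-indexed block `b = (t-1)/m`), the loss applied to a
decision sequence `xs` is `ε_n ⬝ L ⬝ m^{(1−p)/p} ⬝ (xs_{t−m+1} + ⋯ + xs_{(n−1)m+1})`, i.e. the sum
of the decisions in the current history up to and including the first round of block `n`. -/
noncomputable def fVal9 (p L : ℝ) (m N : ℕ) (ε : Fin N → Bool) (xs : ℕ → ℝ) (t : ℕ) : ℝ :=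
  if t ≤ m then 0
  else
    (if h : (t - 1) / m < N then (if ε ⟨(t - 1) / m, h⟩ then (1:ℝ) else -1) else 0)
      * L * (m : ℝ) ^ ((1 - p) / p)
      * ∑ j ∈ Finset.Icc (t - m + 1) ((t - 1) / m * m + 1), xs j

open Finset

def boolSign (b : Bool) : ℝ := if b then 1 else -1

@[simp] lemma boolSign_true : boolSign true = 1 := rfl
@[simp] lemma boolSign_false : boolSign false = -1 := rfl

lemma boolSign_not (b : Bool) : boolSign (!b) = -boolSign b := by
  cases b <;> simp

def flipAt {N : ℕ} (k : Fin N) (ε : Fin N → Bool) : Fin N → Bool :=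
  Function.update ε k (!ε k)

lemma flipAt_involutive {N : ℕ} (k : Fin N) : Function.Involutive (flipAt k) := by
  intro ε
  ext i
  rcases eq_or_ne i k with rfl | hik
  · simp [flipAt]
  · simp [flipAt, Function.update_of_ne hik]

lemma sum_boolSign_mul_eq_zero {N : ℕ} (k : Fin N) (F : (Fin N → Bool) → ℝ)
    (hF : ∀ ε, F (flipAt k ε) = F ε) : ∑ ε, boolSign (ε k) * F ε = 0 := by
  have h := Equiv.sum_comp (flipAt_involutive k).toPerm fun ε => boolSign (ε k) * F ε
  simp only [Function.Involutive.coe_toPerm, hF] at h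
  simp only [flipAt, Function.update_self, boolSign_not, neg_mul, sum_neg_distrib] at h
  linarith

def rademacherSum {n : ℕ} (ε : Fin n → Bool) : ℝ := ∑ i, boolSign (ε i)

lemma rademacherSum_cons {n : ℕ} (a : Bool) (g : Fin n → Bool) :
    rademacherSum (Fin.cons a g : Fin (n + 1) → Bool) = boolSign a + rademacherSum g := by
  simp [rademacherSum, Fin.sum_univ_succ]

lemma sum_fun_fin_succ_bool {n : ℕ} (F : (Fin (n + 1) → Bool) → ℝ) :
    ∑ ε, F ε = ∑ g : Fin n → Bool, (F (Fin.cons true g) + F (Fin.cons false g)) := by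
  rw [← (Fin.consEquiv fun _ => Bool).sum_comp, Fintype.sum_prod_type, Fintype.sum_bool,
    ← sum_add_distrib]
  rfl

lemma sum_rademacherSum_sq (n : ℕ) :
    ∑ ε : Fin n → Bool, rademacherSum ε ^ 2 = n * 2 ^ n := by
  induction n with
  | zero => simp [rademacherSum]
  | succ n ih =>
    rw [sum_fun_fin_succ_bool]
    simp only [rademacherSum_cons, boolSign_true, boolSign_false]
    have h : ∀ s : ℝ, (1 + s) ^ 2 + (-1 + s) ^ 2 = 2 * s ^ 2 + 2 := fun s => by ring
    simp only [h, sum_add_distrib, ← mul_sum, ih, sum_const, card_univ, Fintype.card_fun,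
      Fintype.card_bool, Fintype.card_fin, nsmul_eq_mul]
    push_cast
    ring

lemma sum_rademacherSum_pow_four (n : ℕ) :
    ∑ ε : Fin n → Bool, rademacherSum ε ^ 4 = (3 * n ^ 2 - 2 * n) * 2 ^ n := by
  induction n with
  | zero => simp [rademacherSum]
  | succ n ih =>
    rw [sum_fun_fin_succ_bool]
    simp only [rademacherSum_cons, boolSign_true, boolSign_false]
    have h : ∀ s : ℝ, (1 + s) ^ 4 + (-1 + s) ^ 4 = 2 * s ^ 4 + 12 * s ^ 2 + 2 :=
      fun s => by ring
    simp only [h, sum_add_distrib, ← mul_sum, ih, sum_rademacherSum_sq, sum_const, card_univ,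
      Fintype.card_fun, Fintype.card_bool, Fintype.card_fin, nsmul_eq_mul]
    push_cast
    ring

/-- Pointwise, `2a³|x| - 3a²x² + x⁴ = |x| (|x| - a)² (|x| + 2a) ≥ 0`. -/
lemma sq_sub_pow_four_le_abs {ι : Type*} (s : Finset ι) (f : ι → ℝ) {a : ℝ} (ha : 0 ≤ a) :
    3 * a ^ 2 * ∑ i ∈ s, f i ^ 2 - ∑ i ∈ s, f i ^ 4 ≤ 2 * a ^ 3 * ∑ i ∈ s, |f i| := by
  simp only [mul_sum, ← sum_sub_distrib]
  refine sum_le_sum fun i _ => ?_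
  have key : 2 * a ^ 3 * |f i| - (3 * a ^ 2 * |f i| ^ 2 - |f i| ^ 4)
      = |f i| * (|f i| - a) ^ 2 * (|f i| + 2 * a) := by ring
  have : 0 ≤ |f i| * (|f i| - a) ^ 2 * (|f i| + 2 * a) := by positivity
  rw [show f i ^ 4 = (f i ^ 2) ^ 2 by ring, ← sq_abs (f i)]
  linarith

lemma sqrt_div_three_mul_le_sum_abs_rademacherSum (n : ℕ) :
    √(n / 3) * 2 ^ n ≤ ∑ ε : Fin n → Bool, |rademacherSum ε| := by
  rcases Nat.eq_zero_or_pos n with rfl | hn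
  · simp [rademacherSum]
  -- `a = √(3n)` maximises the lower bound `(3a²n - 3n²) / (2a³)` given by the moments.
  set a := √(3 * n)
  have ha : 0 < a := Real.sqrt_pos.2 (by positivity)
  have ha2 : a ^ 2 = 3 * n := Real.sq_sqrt (by positivity)
  have hmom := sq_sub_pow_four_le_abs univ (rademacherSum (n := n)) ha.le
  have ha3 : a ^ 3 = 3 * n * a := by rw [pow_succ, ha2]
  rw [sum_rademacherSum_sq, sum_rademacherSum_pow_four, ha2, ha3] at hmom
  have hsq : √(n / 3) * a = n := by
    rw [← Real.sqrt_mul (by positivity), show (n : ℝ) / 3 * (3 * n) = n ^ 2 by ring,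
      Real.sqrt_sq (by positivity)]
  have hn' : (0 : ℝ) < n := by exact_mod_cast hn
  have h2n : (0 : ℝ) < 2 ^ n := by positivity
  have : a * (√(n / 3) * 2 ^ n) ≤ a * ∑ ε : Fin n → Bool, |rademacherSum ε| := by
    rw [← mul_assoc, mul_comm a, hsq]
    nlinarith [mul_pos hn' h2n]
  exact le_of_mul_le_mul_left this ha

lemma sum_Icc_one_mul_eq_sum_blocks {M : Type*} [AddCommMonoid M] (f : ℕ → M) (N m : ℕ) :
    ∑ t ∈ Icc 1 (N * m), f t = ∑ b : Fin N, ∑ r : Fin m, f (b * m + r + 1) := by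
  rw [← Ico_add_one_right_eq_Icc, sum_Ico_eq_sum_range, Nat.add_one_sub_one,
    ← Fin.sum_univ_eq_sum_range (fun i => f (1 + i)), ← finProdFinEquiv.sum_comp,
    Fintype.sum_prod_type]
  simp only [finProdFinEquiv_apply_val]
  exact sum_congr rfl fun b _ => sum_congr rfl fun r _ => congrArg f (by ring)

lemma sum_fin_nat_sub_cast (m : ℕ) : ∑ r : Fin m, ((m - r : ℕ) : ℝ) = m * (m + 1) / 2 := by
  have gauss : ∀ k : ℕ, ∑ j ∈ range k, ((j : ℝ) + 1) = k * (k + 1) / 2 := by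
    intro k
    induction k with
    | zero => simp
    | succ k ih => rw [sum_range_succ, ih]; push_cast; ring
  rw [Fin.sum_univ_eq_sum_range (fun r => ((m - r : ℕ) : ℝ)), ← sum_range_reflect, ← gauss]
  refine sum_congr rfl fun j hj => ?_
  rw [mem_range] at hj
  rw [show m - (m - 1 - j) = j + 1 by omega]
  push_cast
  rfl

lemma sum_abs_rademacherSum_tail (n : ℕ) :
    ∑ ε : Fin (n + 1) → Bool, |rademacherSum (Fin.tail ε)| =
      2 * ∑ g : Fin n → Bool, |rademacherSum g| := by
  simp only [sum_fun_fin_succ_bool, Fin.tail_cons, ← two_mul, mul_sum]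

lemma sInf_image_mul_Icc_neg_one_one (K : ℝ) :
    sInf ((fun y => K * y) '' Set.Icc (-1 : ℝ) 1) = -|K| := by
  refine IsLeast.csInf_eq ⟨?_, ?_⟩
  · rcases le_total 0 K with h | h
    · exact ⟨-1, by norm_num, by rw [abs_of_nonneg h]; ring⟩
    · exact ⟨1, by norm_num, by rw [abs_of_nonpos h]; ring⟩
  · rintro _ ⟨y, hy, rfl⟩
    have : |K * y| ≤ |K| := by
      rw [abs_mul]
      exact mul_le_of_le_one_right (abs_nonneg K) (abs_le.2 hy)
    exact (neg_le_neg this).trans (neg_abs_le _)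

lemma rpow_add_two_div_mul_self {x : ℝ} (hx : 0 < x) {p : ℝ} (hp : p ≠ 0) :
    x ^ ((p + 2) / p) * x = (x ^ ((1 - p) / p) * x ^ 2) ^ 2 := by
  have h : (p + 2) / p + 1 = ((1 - p) / p + 2) * 2 := by field_simp; ring
  rw [← Real.rpow_add_one hx.ne', h, Real.rpow_mul hx.le, Real.rpow_add hx, Real.rpow_two,
    Real.rpow_two]

section Losses

variable {p L : ℝ} {m n : ℕ}

/-- A constant decision enters the `m` losses of a block `m + (m - 1) + ⋯ + 1 = m(m+1)/2` times. -/
noncomputable def blockWeight (p L : ℝ) (m : ℕ) : ℝ :=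
  L * (m : ℝ) ^ ((1 - p) / p) * (m * (m + 1) / 2)

lemma blockWeight_nonneg (hL : 0 ≤ L) : 0 ≤ blockWeight p L m := by
  unfold blockWeight
  positivity

lemma fVal9_of_le {N : ℕ} (ε : Fin N → Bool) (xs : ℕ → ℝ) {t : ℕ} (ht : t ≤ m) :
    fVal9 p L m N ε xs t = 0 :=
  if_pos ht

lemma fVal9_succ_block (hm : 0 < m) (ε : Fin (n + 1) → Bool) (xs : ℕ → ℝ) (i : Fin n)
    {r : ℕ} (hr : r < m) :
    fVal9 p L m (n + 1) ε xs ((i + 1) * m + r + 1) =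
      boolSign (ε i.succ) * L * (m : ℝ) ^ ((1 - p) / p) *
        ∑ j ∈ Icc (i * m + r + 2) ((i + 1) * m + 1), xs j := by
  have hsucc : (i + 1) * m = i * m + m := by ring
  have hblock : ((i + 1) * m + r + 1 - 1) / m = i + 1 := by
    rw [Nat.add_sub_cancel, Nat.div_eq_iff hm]
    constructor <;> omega
  have hi : (i : ℕ) + 1 < n + 1 := by omega
  rw [fVal9, if_neg (by nlinarith), hblock, dif_pos hi,
    show ((i + 1) * m + r + 1 - m + 1) = i * m + r + 2 by omega]
  rfl

lemma sum_fVal9 (hm : 0 < m) (ε : Fin (n + 1) → Bool) (xs : ℕ → ℝ) :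
    ∑ t ∈ Icc 1 ((n + 1) * m), fVal9 p L m (n + 1) ε xs t =
      L * (m : ℝ) ^ ((1 - p) / p) * ∑ i : Fin n, boolSign (ε i.succ) *
        ∑ r : Fin m, ∑ j ∈ Icc (i * m + r + 2) ((i + 1) * m + 1), xs j := by
  rw [sum_Icc_one_mul_eq_sum_blocks, Fin.sum_univ_succ, mul_sum]
  simp only [Fin.val_zero, zero_mul, zero_add, Fin.val_succ]
  rw [sum_eq_zero fun r _ => fVal9_of_le ε xs (by omega), zero_add]
  refine sum_congr rfl fun i _ => ?_
  simp only [fVal9_succ_block hm ε xs i (Fin.is_lt _), ← mul_sum]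
  ring

lemma sum_fVal9_const (hm : 0 < m) (ε : Fin (n + 1) → Bool) (y : ℝ) :
    ∑ t ∈ Icc 1 ((n + 1) * m), fVal9 p L m (n + 1) ε (fun _ => y) t =
      blockWeight p L m * rademacherSum (Fin.tail ε) * y := by
  have window : ∀ i : ℕ, ∑ r : Fin m, ∑ j ∈ Icc (i * m + r + 2) ((i + 1) * m + 1), y =
      m * (m + 1) / 2 * y := by
    intro i
    simp only [sum_const, Nat.card_Icc, nsmul_eq_mul, ← sum_mul, ← sum_fin_nat_sub_cast]
    congr 1
    refine sum_congr rfl fun r _ => ?_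
    rw [show (i + 1) * m + 1 + 1 - (i * m + r + 2) = m - r by
      rw [add_one_mul]; omega]
  simp only [sum_fVal9 hm, window, blockWeight, rademacherSum, Fin.tail, sum_mul, mul_sum]
  exact sum_congr rfl fun i _ => by ring

/-- Blocks are `0`-indexed and `(t + m - 2) / m = ⌈(t - 1) / m⌉`: the decision of round `t` may
use the signs of all blocks that have started before round `t`. -/
def DependsOnPastBlocks {N : ℕ} (m T : ℕ) (x : (Fin N → Bool) → ℕ → ℝ) : Prop :=
  ∀ (t : ℕ) (ε ε' : Fin N → Bool), 1 ≤ t → t ≤ T →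
    (∀ k : Fin N, (k : ℕ) < (t + m - 2) / m → ε k = ε' k) → x ε t = x ε' t

lemma DependsOnPastBlocks.flipAt_succ {x : (Fin (n + 1) → Bool) → ℕ → ℝ}
    (hx : DependsOnPastBlocks m ((n + 1) * m) x) (hm : 0 < m) (ε : Fin (n + 1) → Bool)
    (i : Fin n) {j : ℕ} (hj₁ : 1 ≤ j) (hj₂ : j ≤ (i + 1) * m + 1) :
    x (flipAt i.succ ε) j = x ε j := by
  have hsucc : ((i : ℕ) + 2) * m = (i + 1) * m + m := by ring
  refine hx j _ _ hj₁ (by nlinarith [i.is_lt]) fun k hk => ?_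
  have hdiv : (j + m - 2) / m < i + 2 := by
    rw [Nat.div_lt_iff_lt_mul hm]
    omega
  have hki : k ≠ i.succ := fun h => by
    rw [h, Fin.val_succ] at hk
    omega
  exact Function.update_of_ne hki _ _

/-- The history window of a round of block `i + 1` ends at the first round of that block, so it is
blind to `ε (i + 1)`: flipping this sign negates the block's losses. -/
lemma sum_sum_fVal9_eq_zero (hm : 0 < m) {x : (Fin (n + 1) → Bool) → ℕ → ℝ}
    (hx : DependsOnPastBlocks m ((n + 1) * m) x) :
    ∑ ε, ∑ t ∈ Icc 1 ((n + 1) * m), fVal9 p L m (n + 1) ε (x ε) t = 0 := by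
  simp only [sum_fVal9 hm, ← mul_sum]
  rw [sum_comm, sum_eq_zero fun i _ => ?_, mul_zero]
  refine sum_boolSign_mul_eq_zero i.succ _ fun ε => ?_
  refine sum_congr rfl fun r _ => sum_congr rfl fun j hj => ?_
  rw [mem_Icc] at hj
  exact hx.flipAt_succ hm ε i (by omega) hj.2

lemma sInf_sum_fVal9_const (hL : 0 ≤ L) (hm : 0 < m)
    (ε : Fin (n + 1) → Bool) :
    sInf ((fun y : ℝ => ∑ t ∈ Icc 1 ((n + 1) * m), fVal9 p L m (n + 1) ε (fun _ => y) t) ''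
        Set.Icc (-1 : ℝ) 1) =
      -(blockWeight p L m * |rademacherSum (Fin.tail ε)|) := by
  simp only [sum_fVal9_const hm, sInf_image_mul_Icc_neg_one_one, abs_mul _ (rademacherSum _),
    abs_of_nonneg (blockWeight_nonneg hL)]

lemma one_fifth_mul_sqrt_le_blockWeight_mul_sqrt (hp : p ≠ 0) (hL : 0 ≤ L) (hm : 0 < m)
    (hn : 1 ≤ n) :
    1 / 5 * L * √((((n + 1) * m : ℕ) : ℝ) * (m : ℝ) ^ ((p + 2) / p)) ≤
      blockWeight p L m * √(n / 3) := by
  have hM : (0 : ℝ) < m := by exact_mod_cast hm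
  have hn' : (1 : ℝ) ≤ n := by exact_mod_cast hn
  have hsqrt : √((((n + 1) * m : ℕ) : ℝ) * (m : ℝ) ^ ((p + 2) / p)) =
      √(n + 1) * ((m : ℝ) ^ ((1 - p) / p) * m ^ 2) := by
    push_cast
    rw [mul_assoc, mul_comm (m : ℝ), rpow_add_two_div_mul_self hM hp,
      Real.sqrt_mul (by positivity), Real.sqrt_sq (by positivity)]
  have hroot : √(n + 1) / 5 ≤ √(n / 3) / 2 := by
    rw [← pow_le_pow_iff_left₀ (by positivity) (by positivity) two_ne_zero, div_pow, div_pow,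
      Real.sq_sqrt (by positivity), Real.sq_sqrt (by positivity)]
    linarith
  rw [hsqrt, blockWeight]
  calc 1 / 5 * L * (√(n + 1) * ((m : ℝ) ^ ((1 - p) / p) * m ^ 2))
      = L * (m : ℝ) ^ ((1 - p) / p) * m ^ 2 * (√(n + 1) / 5) := by ring
    _ ≤ L * (m : ℝ) ^ ((1 - p) / p) * (m * (m + 1)) * (√(n / 3) / 2) := by
      gcongr
      nlinarith
    _ = _ := by ring

end Losses

/-- lower bound for OCO with finite memory, `p`-norm. There is an absolute
constant `c > 0` such that for every `p ≥ 1`, `L > 0`, memory length `m ≥ 1`, number of blocks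
`N ≥ 2`, horizon `T = N·m`, and every adaptive algorithm (decisions `x ε t ∈ [−1,1]` where
`x ε t` depends only on the signs of the blocks before the block of round `t`), the expected
policy regret against the losses `fVal9` is at least `c L √(T m^{(p+2)/p})`. -/
theorem stmt_9 : ∃ c > (0:ℝ),
    ∀ (p L : ℝ) (m N T : ℕ), 1 ≤ p → 0 < L → 1 ≤ m → 2 ≤ N → T = N * m →
    ∀ x : (Fin N → Bool) → ℕ → ℝ,
      (∀ ε t, x ε t ∈ Set.Icc (-1:ℝ) 1) →
      (∀ (t : ℕ) (ε ε' : Fin N → Bool), 1 ≤ t → t ≤ T →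
        (∀ k : Fin N, (k : ℕ) < (t + m - 2) / m → ε k = ε' k) → x ε t = x ε' t) →
      ((2 ^ N : ℝ))⁻¹ *
        (∑ ε : Fin N → Bool,
          ((∑ t ∈ Finset.Icc 1 T, fVal9 p L m N ε (x ε) t)
            - sInf ((fun y : ℝ => ∑ t ∈ Finset.Icc 1 T, fVal9 p L m N ε (fun _ => y) t) ''
                Set.Icc (-1:ℝ) 1)))
      ≥ c * L * Real.sqrt ((T : ℝ) * (m : ℝ) ^ ((p + 2) / p)) := by
  refine ⟨1 / 5, by norm_num, fun p L m N T hp hL hm hN hT x _ hx => ?_⟩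
  obtain ⟨n, rfl⟩ : ∃ n, N = n + 1 := ⟨N - 1, by omega⟩
  subst hT
  simp only [sInf_sum_fVal9_const hL.le hm, sub_neg_eq_add, sum_add_distrib,
    sum_sum_fVal9_eq_zero hm hx, zero_add, ← mul_sum, sum_abs_rademacherSum_tail]
  calc 1 / 5 * L * √((((n + 1) * m : ℕ) : ℝ) * (m : ℝ) ^ ((p + 2) / p))
      ≤ blockWeight p L m * √(n / 3) :=
        one_fifth_mul_sqrt_le_blockWeight_mul_sqrt (by positivity) hL.le hm (by omega)
    _ ≤ blockWeight p L m * ((2 ^ n)⁻¹ * ∑ g : Fin n → Bool, |rademacherSum g|) := by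
        gcongr
        · exact blockWeight_nonneg hL.le
        · rw [le_inv_mul_iff₀ (by positivity), mul_comm]
          exact sqrt_div_three_mul_le_sum_abs_rademacherSum n
    _ = _ := by
        rw [pow_succ]
        field_simp
end

section
/- Let ρ ∈ [1/2, 1) be such that m = 1/(1−ρ) is a positive integer, let L > 0, let N ≥ 2 be an integer, and let T = N·m. Take 𝒳 = [−1,1] ⊆ ℝ and the OCO with ρ-discounted infinite memory instance with the 2-norm, so h_t = (x_t, ρ x_{t−1}, ρ² x_{t−2}, …, ρ^{t−1} x_1, 0, …). For each ε ∈ {−1,+1}^N define losses: f_t^ε = 0 for t ≤ m; and for t > m lying in block n (i.e., (n−1)m < t ≤ nm), f_t^ε(h_t) = ε_n · L · m^{−1/2} · Σ_{k=0}^{m−1} ρ^{k + t − (n−1)m − 1} · x_{(n−1)m+1−k}. (Each f_t^ε is linear, hence convex, and is L-Lipschitz with respect to the norm on ℋ.) Then there is an absolute constant c > 0 such that for every adaptive algorithm — every family of functions x_t : {−1,+1}^N → [−1,1] (t = 1, …, T) such that x_t(ε) depends only on ε_1, …, ε_{⌈(t−1)/m⌉} — the expected policy regret satisfies E_{ε uniform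 on {−1,+1}^N}[ Σ_{t=1}^{T} f_t^ε(h_t(ε)) − min_{x ∈ [−1,1]} Σ_{t=1}^{T} f̄_t^ε(x) ] ≥ c · L · √T · (1−ρ)^{−1}. -/
/-- The adversarial loss value for the ρ-discounted infinite memory lower bound.  For `t ≤ m`
the loss is `0`.  For `t > m` lying in block `n` (0-indexed block `b = (t-1)/m`), the loss
applied to a decision sequence `xs` is
`ε_n ⬝ L ⬝ m^{−1/2} ⬝ ∑_{k=0}^{m−1} ρ^{k + t − (n−1)m − 1} xs_{(n−1)m+1−k}`. -/
noncomputable def fVal10 (ρ L : ℝ) (m N : ℕ) (ε : Fin N → Bool) (xs : ℕ → ℝ) (t : ℕ) : ℝ :=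
  if t ≤ m then 0
  else
    (if h : (t - 1) / m < N then (if ε ⟨(t - 1) / m, h⟩ then (1:ℝ) else -1) else 0)
      * L * (Real.sqrt m)⁻¹
      * ∑ k ∈ Finset.range m,
          ρ ^ (k + t - (t - 1) / m * m - 1) * xs ((t - 1) / m * m + 1 - k)

/-!
Average over uniformly random block signs `ε`. In every block `b ≥ 1` the loss is `ε_b` times a
linear functional of the decisions up to the first round of block `b`, which an adapted algorithm
chooses before `ε_b` is revealed; so its expected loss is zero. A constant decision
`y` suffers total loss `c · (∑_{b ≥ 1} ε_b) · y` with `c = L m^{-1/2} (∑_{k<m} ρ^k)²`, so the best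
comparator gets `-c |∑_{b ≥ 1} ε_b|`. Khintchine's inequality `E |∑ ε_b| ≥ √((N-1)/3)`, obtained
from `E S² = n`, `E S⁴ ≤ 3 n²` and Hölder, and `∑_{k<m} ρ^k ≥ m/2` (since `ρ^m ≤ e⁻¹`) finish.
-/

open Finset

lemma Finset.sum_sq_pow_three_le_sq_sum_abs_mul_sum_pow_four {α : Type*} (s : Finset α)
    (f : α → ℝ) :
    (∑ a ∈ s, f a ^ 2) ^ 3 ≤ (∑ a ∈ s, |f a|) ^ 2 * ∑ a ∈ s, f a ^ 4 := by
  have h₁ : (∑ a ∈ s, f a ^ 2) ^ 2 ≤ (∑ a ∈ s, |f a|) * ∑ a ∈ s, |f a| ^ 3 :=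
    sum_sq_le_sum_mul_sum_of_sq_le_mul s (fun _ _ => abs_nonneg _) (fun _ _ => by positivity)
      fun a _ => le_of_eq (by rw [← sq_abs (f a)]; ring)
  have h₂ : (∑ a ∈ s, |f a| ^ 3) ^ 2 ≤ (∑ a ∈ s, f a ^ 2) * ∑ a ∈ s, f a ^ 4 :=
    sum_sq_le_sum_mul_sum_of_sq_le_mul s (fun _ _ => by positivity) (fun _ _ => by positivity)
      fun a _ => le_of_eq (by rw [show f a ^ 4 = (f a ^ 2) ^ 2 by ring, ← sq_abs (f a)]; ring)
  have hA : 0 ≤ ∑ a ∈ s, f a ^ 2 := sum_nonneg fun _ _ => by positivity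
  rcases hA.eq_or_lt with hA0 | hApos
  · rw [← hA0, zero_pow three_ne_zero]
    positivity
  · have h₃ : (∑ a ∈ s, f a ^ 2) ^ 4 ≤ (∑ a ∈ s, |f a|) ^ 2 * (∑ a ∈ s, |f a| ^ 3) ^ 2 := by
      rw [← mul_pow, show 4 = 2 * 2 by rfl, pow_mul]
      gcongr
    have h₄ := mul_le_mul_of_nonneg_left h₂ (sq_nonneg (∑ a ∈ s, |f a|))
    nlinarith

namespace Rademacher

variable {ι : Type*}

noncomputable def sign (ε : ι → Bool) (i : ι) : ℝ := if ε i then 1 else -1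

lemma sign_sq (ε : ι → Bool) (i : ι) : sign ε i ^ 2 = 1 := by
  unfold sign; split <;> norm_num

variable [DecidableEq ι]

def toggle (i : ι) (ε : ι → Bool) : ι → Bool := Function.update ε i (!ε i)

lemma toggle_involutive (i : ι) : Function.Involutive (toggle i) := by
  intro ε
  simp [toggle, Function.update_idem, Function.update_eq_self]

lemma sign_toggle_self (ε : ι → Bool) (i : ι) : sign (toggle i ε) i = -sign ε i := by
  unfold sign toggle; cases ε i <;> simp

lemma sign_toggle_of_ne (ε : ι → Bool) {i j : ι} (h : j ≠ i) :
    sign (toggle i ε) j = sign ε j := by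
  simp only [sign, toggle, Function.update_of_ne h]

lemma sum_sign_toggle_of_notMem {s : Finset ι} {i : ι} (hi : i ∉ s) (ε : ι → Bool) :
    ∑ j ∈ s, sign (toggle i ε) j = ∑ j ∈ s, sign ε j :=
  sum_congr rfl fun _ hj => sign_toggle_of_ne ε (ne_of_mem_of_not_mem hj hi)

variable [Fintype ι]

lemma sum_sign_mul_eq_zero (i : ι) {F : (ι → Bool) → ℝ} (hF : ∀ ε, F (toggle i ε) = F ε) :
    ∑ ε, sign ε i * F ε = 0 := by
  have h := Equiv.sum_comp (toggle_involutive i).toPerm fun ε => sign ε i * F ε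
  simp only [Function.Involutive.coe_toPerm, sign_toggle_self, hF, neg_mul, sum_neg_distrib] at h
  linarith

lemma sum_sign_mul_comp_sum_sign_eq_zero {s : Finset ι} {i : ι} (hi : i ∉ s) (φ : ℝ → ℝ) :
    ∑ ε, sign ε i * φ (∑ j ∈ s, sign ε j) = 0 :=
  sum_sign_mul_eq_zero i fun ε => by rw [sum_sign_toggle_of_notMem hi]

lemma sum_sum_sign_sq (s : Finset ι) :
    ∑ ε : ι → Bool, (∑ i ∈ s, sign ε i) ^ 2 = s.card * 2 ^ Fintype.card ι := by
  induction s using Finset.induction_on with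
  | empty => simp
  | insert i s hi ih =>
    have expand : ∀ ε : ι → Bool, (∑ j ∈ insert i s, sign ε j) ^ 2
        = (∑ j ∈ s, sign ε j) ^ 2 + 1 + sign ε i * (2 * ∑ j ∈ s, sign ε j) := by
      intro ε
      rw [sum_insert hi]
      linear_combination sign_sq ε i
    simp only [expand, sum_add_distrib, ih, sum_sign_mul_comp_sum_sign_eq_zero hi (2 * ·),
      card_insert_of_notMem hi, sum_const, card_univ, Fintype.card_fun, Fintype.card_bool]
    push_cast
    ring

lemma sum_sum_sign_pow_four_le (s : Finset ι) :
    ∑ ε : ι → Bool, (∑ i ∈ s, sign ε i) ^ 4 ≤ 3 * s.card ^ 2 * 2 ^ Fintype.card ι := by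
  induction s using Finset.induction_on with
  | empty => simp
  | insert i s hi ih =>
    have expand : ∀ ε : ι → Bool, (∑ j ∈ insert i s, sign ε j) ^ 4
        = (∑ j ∈ s, sign ε j) ^ 4 + 6 * (∑ j ∈ s, sign ε j) ^ 2 + 1
          + sign ε i * (4 * (∑ j ∈ s, sign ε j) ^ 3 + 4 * ∑ j ∈ s, sign ε j) := by
      intro ε
      rw [sum_insert hi]
      linear_combination (sign ε i ^ 2 + 1 + 4 * sign ε i * ∑ j ∈ s, sign ε j
        + 6 * (∑ j ∈ s, sign ε j) ^ 2) * sign_sq ε i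
    simp only [expand, sum_add_distrib, ← mul_sum, sum_sum_sign_sq,
      sum_sign_mul_comp_sum_sign_eq_zero hi (fun S => 4 * S ^ 3 + 4 * S), card_insert_of_notMem hi,
      sum_const, card_univ, Fintype.card_fun, Fintype.card_bool, nsmul_eq_mul]
    push_cast
    have : (0 : ℝ) ≤ 2 ^ Fintype.card ι := by positivity
    nlinarith

lemma sqrt_card_div_three_le_mean_abs_sum_sign (s : Finset ι) :
    √(s.card / 3) ≤ (2 ^ Fintype.card ι)⁻¹ * ∑ ε : ι → Bool, |∑ i ∈ s, sign ε i| := by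
  set P : ℝ := 2 ^ Fintype.card ι
  set n : ℝ := (s.card : ℝ)
  set X := ∑ ε : ι → Bool, |∑ i ∈ s, sign ε i|
  have hP : 0 < P := by positivity
  have hn : 0 ≤ n := by positivity
  have hX : 0 ≤ X := sum_nonneg fun _ _ => abs_nonneg _
  have holder := Finset.sum_sq_pow_three_le_sq_sum_abs_mul_sum_pow_four univ
    fun ε : ι → Bool => ∑ i ∈ s, sign ε i
  rw [sum_sum_sign_sq] at holder
  have hcube : (n * P) ^ 3 ≤ X ^ 2 * (3 * n ^ 2 * P) :=
    holder.trans (mul_le_mul_of_nonneg_left (sum_sum_sign_pow_four_le s) (sq_nonneg X))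
  have key : n * P ^ 2 ≤ 3 * X ^ 2 := by
    rcases hn.eq_or_lt with hn0 | hnpos
    · rw [← hn0, zero_mul]; positivity
    · have : n ^ 2 * P * (n * P ^ 2) ≤ n ^ 2 * P * (3 * X ^ 2) := by linear_combination hcube
      exact le_of_mul_le_mul_left this (by positivity)
  rw [Real.sqrt_le_iff]
  refine ⟨by positivity, ?_⟩
  rw [mul_pow, inv_pow, div_le_iff₀ (by norm_num : (0:ℝ) < 3), ← div_eq_inv_mul,
    div_mul_eq_mul_div, le_div_iff₀ (by positivity)]
  linarith

end Rademacher

lemma Finset.sum_range_mul_eq_sum_sum {M : Type*} [AddCommMonoid M] (f : ℕ → M) (N m : ℕ) :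
    ∑ t ∈ range (N * m), f t = ∑ b ∈ range N, ∑ j ∈ range m, f (b * m + j) := by
  induction N with
  | zero => simp
  | succ N ih => rw [Nat.succ_mul, sum_range_add, ih, sum_range_succ]

lemma Finset.sum_Icc_one_mul_eq_sum_fin_sum {M : Type*} [AddCommMonoid M] (f : ℕ → M) (N m : ℕ) :
    ∑ t ∈ Icc 1 (N * m), f t = ∑ b : Fin N, ∑ j ∈ range m, f (b * m + j + 1) := by
  rw [← Ico_add_one_right_eq_Icc, sum_Ico_eq_sum_range, Nat.add_sub_cancel,
    sum_range_mul_eq_sum_sum,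
    ← Fin.sum_univ_eq_sum_range (fun b => ∑ j ∈ range m, f (1 + (b * m + j)))]
  simp only [add_comm 1]

lemma isLeast_image_mul_Icc_neg_one_one (a : ℝ) :
    IsLeast ((fun y => a * y) '' Set.Icc (-1) 1) (-|a|) := by
  refine ⟨?_, ?_⟩
  · rcases le_total 0 a with ha | ha
    · exact ⟨-1, by norm_num, by simp [abs_of_nonneg ha]⟩
    · exact ⟨1, by norm_num, by simp [abs_of_nonpos ha]⟩
  · rintro _ ⟨y, hy, rfl⟩
    have : |a * y| ≤ |a| := by
      rw [abs_mul]
      exact mul_le_of_le_one_right (abs_nonneg a) (abs_le.mpr hy)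
    linarith [neg_abs_le (a * y)]

lemma half_le_geom_sum {ρ : ℝ} {m : ℕ} (hρ1 : ρ < 1) (hm : (m : ℝ) = (1 - ρ)⁻¹) :
    (m : ℝ) / 2 ≤ ∑ k ∈ range m, ρ ^ k := by
  have hm0 : (0 : ℝ) < m := by rw [hm]; exact inv_pos.mpr (by linarith)
  have hρm : ρ = 1 - 1 / m := by rw [hm]; field_simp; ring
  have hpow : ρ ^ m < 1 / 2 := by
    calc ρ ^ m = (1 - 1 / m) ^ m := by rw [hρm]
      _ ≤ Real.exp (-1) := Real.one_sub_div_pow_le_exp_neg (by exact_mod_cast hm0)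
      _ < 1 / 2 := Real.exp_neg_one_lt_half
  have hgeom : ∑ k ∈ range m, ρ ^ k = m * (1 - ρ ^ m) := by
    rw [← mul_neg_geom_sum, hm, inv_mul_cancel_left₀ (by linarith)]
  rw [hgeom]
  nlinarith

lemma Fin.card_filter_val_ne_zero (N : ℕ) :
    (univ.filter fun b : Fin N => (b : ℕ) ≠ 0).card = N - 1 := by
  rcases N with _ | N
  · rfl
  · simp [filter_ne', card_erase_of_mem]

lemma two_fifths_mul_sqrt_le_sqrt_sub_one_div_three {n : ℝ} (hn : 2 ≤ n) :
    2 / 5 * √n ≤ √((n - 1) / 3) :=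
  calc 2 / 5 * √n = √(4 / 25 * n) := by
        rw [Real.sqrt_mul (by norm_num), show (4 / 25 : ℝ) = (2 / 5) ^ 2 by norm_num,
          Real.sqrt_sq (by norm_num)]
    _ ≤ √((n - 1) / 3) := Real.sqrt_le_sqrt (by linarith)

open Rademacher

lemma fVal10_block {ρ L : ℝ} {m N : ℕ} (ε : Fin N → Bool) (xs : ℕ → ℝ) (b : Fin N) {j : ℕ}
    (hj : j < m) : fVal10 ρ L m N ε xs (b * m + j + 1) = if (b : ℕ) = 0 then 0 else
      sign ε b * (L * (√m)⁻¹ * ∑ k ∈ range m, ρ ^ (k + j) * xs (b * m + 1 - k)) := by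
  have hdiv : (b * m + j + 1 - 1) / m = b := by
    rw [Nat.add_sub_cancel, Nat.add_comm, Nat.add_mul_div_right _ _ (by omega),
      Nat.div_eq_of_lt hj, Nat.zero_add]
  split_ifs with hb
  · simp only [fVal10, hb, zero_mul, zero_add, if_pos (show j + 1 ≤ m by omega)]
  · have hbm : m ≤ b * m := Nat.le_mul_of_pos_left m (Nat.pos_of_ne_zero hb)
    have hexp : ∀ k, k + (b * m + j + 1) - b * m - 1 = k + j := fun k => by omega
    simp only [fVal10, if_neg (show ¬ b * m + j + 1 ≤ m by omega), hdiv, dif_pos b.2, hexp, sign]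
    ring

lemma sum_fVal10_const (ρ L : ℝ) {m N : ℕ} (ε : Fin N → Bool) (y : ℝ) :
    ∑ t ∈ Icc 1 (N * m), fVal10 ρ L m N ε (fun _ => y) t
      = L * (√m)⁻¹ * (∑ k ∈ range m, ρ ^ k) ^ 2
        * (∑ b ∈ univ.filter fun b : Fin N => (b : ℕ) ≠ 0, sign ε b) * y := by
  have hblock : ∀ b : Fin N, ∑ j ∈ range m, fVal10 ρ L m N ε (fun _ => y) (b * m + j + 1)
      = if (b : ℕ) ≠ 0 then L * (√m)⁻¹ * (∑ k ∈ range m, ρ ^ k) ^ 2 * sign ε b * y else 0 := by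
    intro b
    rw [sum_congr rfl fun j hj => fVal10_block ε _ b (mem_range.mp hj)]
    by_cases hb : (b : ℕ) = 0
    · simp [hb]
    · have hG : ∑ j ∈ range m, ∑ k ∈ range m, ρ ^ (k + j) * y
          = (∑ k ∈ range m, ρ ^ k) ^ 2 * y := by
        simp only [sq, sum_mul, mul_sum, pow_add]
      simp only [hb, if_false, ne_eq, not_false_eq_true, if_true, ← mul_sum, hG]
      ring
  rw [sum_Icc_one_mul_eq_sum_fin_sum, sum_congr rfl fun b _ => hblock b, ← sum_filter, mul_sum,
    sum_mul]

-- `(t + m - 2) / m = ⌈(t - 1) / m⌉` is the number of blocks completed before round `t`.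
def BlockAdapted (m N : ℕ) (x : (Fin N → Bool) → ℕ → ℝ) : Prop :=
  ∀ (t : ℕ) (ε ε' : Fin N → Bool), 1 ≤ t → t ≤ N * m →
    (∀ k : Fin N, (k : ℕ) < (t + m - 2) / m → ε k = ε' k) → x ε t = x ε' t

section Adapted

variable {m N : ℕ} {x : (Fin N → Bool) → ℕ → ℝ}

lemma adapted_toggle_eq (hadapt : BlockAdapted m N x) (ε : Fin N → Bool) {b : Fin N}
    (hb : (b : ℕ) ≠ 0) {k : ℕ} (hk : k < m) :
    x (toggle b ε) (b * m + 1 - k) = x ε (b * m + 1 - k) := by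
  have hbm : m ≤ b * m := Nat.le_mul_of_pos_left m (Nat.pos_of_ne_zero hb)
  have hbN : b * m + m ≤ N * m := by simpa [Nat.succ_mul] using Nat.mul_le_mul_right m b.2
  have hblock : (b * m + 1 - k + m - 2) / m < b + 1 := by
    rw [Nat.div_lt_iff_lt_mul (by omega), Nat.succ_mul]
    omega
  refine hadapt _ _ _ (by omega) (by omega) fun i hi => ?_
  have hib : i ≠ b := Fin.ne_of_val_ne (by omega)
  exact Function.update_of_ne hib _ ε

lemma sum_sum_fVal10_eq_zero (ρ L : ℝ) (hadapt : BlockAdapted m N x) :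
    ∑ ε, ∑ t ∈ Icc 1 (N * m), fVal10 ρ L m N ε (x ε) t = 0 := by
  simp only [sum_Icc_one_mul_eq_sum_fin_sum]
  rw [sum_comm]
  refine sum_eq_zero fun b _ => ?_
  rw [sum_comm]
  refine sum_eq_zero fun j hj => ?_
  rw [mem_range] at hj
  simp only [fVal10_block _ _ _ hj]
  split_ifs with hb
  · exact sum_const_zero
  · refine sum_sign_mul_eq_zero b fun ε => ?_
    congr 1
    exact sum_congr rfl fun k hk => by rw [adapted_toggle_eq hadapt ε hb (mem_range.mp hk)]

end Adapted

/-- lower bound for OCO with ρ-discounted infinite memory, 2-norm. There is an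
absolute constant `c > 0` such that for every `ρ ∈ [1/2, 1)` with `m = 1/(1−ρ)` a positive
integer, every `L > 0`, every number of blocks `N ≥ 2`, horizon `T = N·m`, and every adaptive
algorithm (decisions `x ε t ∈ [−1,1]` depending only on the signs of the blocks before the block
of round `t`), the expected policy regret against the losses `fVal10` is at least
`c L √T (1−ρ)^{−1}`. -/
theorem stmt_10 : ∃ c > (0:ℝ),
    ∀ (ρ L : ℝ) (m N T : ℕ), (1:ℝ)/2 ≤ ρ → ρ < 1 → (m : ℝ) = (1 - ρ)⁻¹ → 0 < L →
      2 ≤ N → T = N * m →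
    ∀ x : (Fin N → Bool) → ℕ → ℝ,
      (∀ ε t, x ε t ∈ Set.Icc (-1:ℝ) 1) →
      (∀ (t : ℕ) (ε ε' : Fin N → Bool), 1 ≤ t → t ≤ T →
        (∀ k : Fin N, (k : ℕ) < (t + m - 2) / m → ε k = ε' k) → x ε t = x ε' t) →
      ((2 ^ N : ℝ))⁻¹ *
        (∑ ε : Fin N → Bool,
          ((∑ t ∈ Finset.Icc 1 T, fVal10 ρ L m N ε (x ε) t)
            - sInf ((fun y : ℝ => ∑ t ∈ Finset.Icc 1 T, fVal10 ρ L m N ε (fun _ => y) t) ''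
                Set.Icc (-1:ℝ) 1)))
      ≥ c * L * Real.sqrt (T : ℝ) * (1 - ρ)⁻¹ := by
  refine ⟨1 / 10, by norm_num, ?_⟩
  intro ρ L m N T _ hρ1 hm hL hN hT x _ hadapt
  subst hT
  have hm0 : (0 : ℝ) < m := hm ▸ inv_pos.mpr (sub_pos.mpr hρ1)
  set G := ∑ k ∈ range m, ρ ^ k
  set B := univ.filter fun b : Fin N => (b : ℕ) ≠ 0
  have hregret : ∀ ε, (∑ t ∈ Icc 1 (N * m), fVal10 ρ L m N ε (x ε) t)
      - sInf ((fun y : ℝ => ∑ t ∈ Icc 1 (N * m), fVal10 ρ L m N ε (fun _ => y) t) ''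
          Set.Icc (-1) 1)
      = (∑ t ∈ Icc 1 (N * m), fVal10 ρ L m N ε (x ε) t)
        + L * (√m)⁻¹ * G ^ 2 * |∑ b ∈ B, sign ε b| := by
    intro ε
    simp only [sum_fVal10_const, (isLeast_image_mul_Icc_neg_one_one _).csInf_eq, abs_mul,
      abs_of_pos hL, abs_inv, abs_sq, abs_of_nonneg (Real.sqrt_nonneg _)]
    ring
  have hkhintchine := sqrt_card_div_three_le_mean_abs_sum_sign B
  rw [Fin.card_filter_val_ne_zero, Fintype.card_fin, Nat.cast_sub (by omega), Nat.cast_one]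
    at hkhintchine
  have hG := half_le_geom_sum hρ1 hm
  have hcoef : m * √m / 4 ≤ (√m)⁻¹ * G ^ 2 := by
    have hs : √(m : ℝ) ^ 2 = m := Real.sq_sqrt hm0.le
    calc m * √m / 4 = (√m)⁻¹ * (m / 2) ^ 2 := by
          field_simp
          linear_combination 4 * hs
      _ ≤ (√m)⁻¹ * G ^ 2 := by gcongr
  rw [sum_congr rfl fun ε _ => hregret ε, sum_add_distrib, sum_sum_fVal10_eq_zero ρ L hadapt,
    zero_add, ← mul_sum, ← hm]
  calc 1 / 10 * L * √(↑(N * m)) * m = L * (m * √m / 4) * (2 / 5 * √N) := by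
        rw [Nat.cast_mul, Real.sqrt_mul (Nat.cast_nonneg _)]; ring
    _ ≤ L * ((√m)⁻¹ * G ^ 2) * ((2 ^ N)⁻¹ * ∑ ε, |∑ b ∈ B, sign ε b|) := by
        gcongr L * ?_ * ?_
        exact (two_fifths_mul_sqrt_le_sqrt_sub_one_div_three (by exact_mod_cast hN)).trans
          hkhintchine
    _ = _ := by ring
end

section
/- Let d ≥ 1, κ ≥ 1, ρ ∈ (0,1), and let F̃, G ∈ ℝ^{d×d} satisfy ‖F̃^j‖₂ ≤ κ² ρ^j for all j ≥ 0 and ‖G‖₂ ≤ κ. Define weights ξ_0 = ξ_1 = ξ_2 = 1 and ξ_j = ρ^{−(j−2)/2} for j ≥ 3, and for a sequence Y = (Y^{[r]})_{r≥1} of d×d matrices set ‖Y‖_𝒳² = Σ_{r≥1} ρ^{−r} ‖Y^{[r]}‖_F² (with a matrix P acting coordinatewise: PY = (P Y^{[r]})_r). Let s ≥ 2 be an integer, let Y_0 be a matrix sequence with ‖Y_0‖_𝒳 < ∞, and for k ≥ 1 let Y_k = F̃^{k−1} G X_k for matrix sequences X_k with ‖X_k‖_𝒳 < ∞. Then (ξ_s²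 ‖F̃^{s−1} G Y_0‖_𝒳² + Σ_{k=1}^{∞} ξ_{s+k}² ‖F̃^{s} Y_k‖_𝒳²)^{1/2} ≤ κ⁴ ρ^{s/2} · (Σ_{k=0}^{∞} ξ_k² ‖Y_k‖_𝒳²)^{1/2}. -/
/-- Spectral norm (ℓ²-operator norm) of a real square matrix. -/
noncomputable def spec12 {d : ℕ} (M : Matrix (Fin d) (Fin d) ℝ) : ℝ :=
  ‖Matrix.toEuclideanCLM (𝕜 := ℝ) M‖

/-- Frobenius norm of a real square matrix. -/
noncomputable def frob12 {d : ℕ} (M : Matrix (Fin d) (Fin d) ℝ) : ℝ :=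
  Real.sqrt (∑ i, ∑ j, (M i j) ^ 2)

/-- The squared ρ-weighted norm `‖Y‖_𝒳² = ∑_{r≥1} ρ^{−r} ‖Y^{[r]}‖_F²` on sequences of
matrices (indexed from `1`). -/
noncomputable def xNormSq12 {d : ℕ} (ρ : ℝ) (Y : ℕ → Matrix (Fin d) (Fin d) ℝ) : ℝ :=
  ∑' r : ℕ, (ρ ^ (r + 1))⁻¹ * frob12 (Y (r + 1)) ^ 2

/-- The weights `ξ_0 = ξ_1 = ξ_2 = 1` and `ξ_j = ρ^{−(j−2)/2}` for `j ≥ 3`. -/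
noncomputable def xiw12 (ρ : ℝ) (j : ℕ) : ℝ := (Real.sqrt ρ ^ (j - 2))⁻¹

/-!
For a matrix `P`, `‖P M‖_F ≤ ‖P‖₂ ‖M‖_F` column by column, hence `‖P Y‖_𝒳 ≤ ‖P‖₂ ‖Y‖_𝒳`.
So each slot of `Aˢ Y` is controlled by a single slot of `Y`: slot `s` by `Y_0`, with factor
`ξ_s² κ⁶ ρ^{2(s-1)} = κ⁶ ρ^s`, and slot `s + k` by `Y_k`, with factor `ξ_{s+k}² κ⁴ ρ^{2s} ≤ κ⁴ ρ^s ξ_k²`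
since `ξ_{k+s}² ρ^s ≤ ξ_k²`. Summing over the slots gives the bound `κ⁸ ρ^s` for the squared norms.
-/

section MatrixNorms

variable {d : ℕ}

lemma spec12_nonneg (M : Matrix (Fin d) (Fin d) ℝ) : 0 ≤ spec12 M := norm_nonneg _

lemma frob12_nonneg (M : Matrix (Fin d) (Fin d) ℝ) : 0 ≤ frob12 M := Real.sqrt_nonneg _

lemma frob12_sq (M : Matrix (Fin d) (Fin d) ℝ) : frob12 M ^ 2 = ∑ i, ∑ j, M i j ^ 2 :=
  Real.sq_sqrt (by positivity)

lemma frob12_sq_eq_sum_norm_col_sq (M : Matrix (Fin d) (Fin d) ℝ) :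
    frob12 M ^ 2 = ∑ j, ‖WithLp.toLp 2 (fun i => M i j)‖ ^ 2 := by
  simp only [frob12_sq, EuclideanSpace.norm_sq_eq, Real.norm_eq_abs, sq_abs]
  exact Finset.sum_comm

lemma spec12_mul_le (M N : Matrix (Fin d) (Fin d) ℝ) : spec12 (M * N) ≤ spec12 M * spec12 N := by
  rw [spec12, spec12, spec12, map_mul]
  exact norm_mul_le _ _

lemma frob12_mul_le (M N : Matrix (Fin d) (Fin d) ℝ) : frob12 (M * N) ≤ spec12 M * frob12 N := by
  have hcol : ∀ j, ‖WithLp.toLp 2 (fun i => (M * N) i j)‖ ^ 2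
      ≤ spec12 M ^ 2 * ‖WithLp.toLp 2 (fun i => N i j)‖ ^ 2 := fun j => by
    rw [← mul_pow]
    gcongr
    exact (Matrix.toEuclideanCLM (𝕜 := ℝ) M).le_opNorm (WithLp.toLp 2 fun i => N i j)
  refine (pow_le_pow_iff_left₀ (frob12_nonneg _)
    (mul_nonneg (spec12_nonneg M) (frob12_nonneg N)) two_ne_zero).1 ?_
  rw [mul_pow, frob12_sq_eq_sum_norm_col_sq, frob12_sq_eq_sum_norm_col_sq, Finset.mul_sum]
  exact Finset.sum_le_sum fun j _ => hcol j

end MatrixNorms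

section WeightedNorm

variable {d : ℕ} {ρ : ℝ}

lemma xNormSq12_nonneg (hρ : 0 ≤ ρ) (Y : ℕ → Matrix (Fin d) (Fin d) ℝ) : 0 ≤ xNormSq12 ρ Y :=
  tsum_nonneg fun r => by positivity

lemma xNormSq12_mul_le (hρ : 0 ≤ ρ) (P : Matrix (Fin d) (Fin d) ℝ)
    {Y : ℕ → Matrix (Fin d) (Fin d) ℝ}
    (hY : Summable fun r : ℕ => (ρ ^ (r + 1))⁻¹ * frob12 (Y (r + 1)) ^ 2) :
    xNormSq12 ρ (fun r => P * Y r) ≤ spec12 P ^ 2 * xNormSq12 ρ Y := by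
  have hterm : ∀ r : ℕ, (ρ ^ (r + 1))⁻¹ * frob12 (P * Y (r + 1)) ^ 2
      ≤ spec12 P ^ 2 * ((ρ ^ (r + 1))⁻¹ * frob12 (Y (r + 1)) ^ 2) := fun r => by
    rw [mul_left_comm, ← mul_pow]
    have hPY := frob12_mul_le P (Y (r + 1))
    gcongr
    exact frob12_nonneg _
  have hY' := hY.mul_left (spec12 P ^ 2)
  rw [xNormSq12, xNormSq12, ← tsum_mul_left]
  exact (Summable.of_nonneg_of_le (fun r => by positivity) hterm hY').tsum_le_tsum hterm hY'

lemma xiw12_sq (hρ : 0 ≤ ρ) (j : ℕ) : xiw12 ρ j ^ 2 = (ρ ^ (j - 2))⁻¹ := by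
  rw [xiw12, inv_pow, ← pow_mul, mul_comm, pow_mul, Real.sq_sqrt hρ]

lemma xiw12_sq_add_mul_pow_le (hρ0 : 0 < ρ) (hρ1 : ρ ≤ 1) (j s : ℕ) :
    xiw12 ρ (j + s) ^ 2 * ρ ^ s ≤ xiw12 ρ j ^ 2 := by
  rw [xiw12_sq hρ0.le, xiw12_sq hρ0.le, inv_mul_le_iff₀ (by positivity), ← div_eq_mul_inv,
    le_div_iff₀ (by positivity), ← pow_add]
  exact pow_le_pow_of_le_one hρ0.le hρ1 (by omega)

end WeightedNorm

section HistoryOperator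

variable {d : ℕ} {κ ρ : ℝ} {Y : ℕ → Matrix (Fin d) (Fin d) ℝ}

lemma weighted_xNormSq12_pow_mul_mul_le (hρ : 0 < ρ) (hκ : 1 ≤ κ)
    {F G : Matrix (Fin d) (Fin d) ℝ} {s : ℕ} (hs : 2 ≤ s)
    (hF : spec12 (F ^ (s - 1)) ≤ κ ^ 2 * ρ ^ (s - 1)) (hG : spec12 G ≤ κ)
    (hY : Summable fun r : ℕ => (ρ ^ (r + 1))⁻¹ * frob12 (Y (r + 1)) ^ 2) :
    xiw12 ρ s ^ 2 * xNormSq12 ρ (fun r => F ^ (s - 1) * (G * Y r))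
      ≤ κ ^ 8 * ρ ^ s * (xiw12 ρ 0 ^ 2 * xNormSq12 ρ Y) := by
  obtain ⟨t, rfl⟩ : ∃ t, s = t + 2 := ⟨s - 2, by omega⟩
  have hX := xNormSq12_nonneg hρ.le Y
  have hFG : spec12 (F ^ (t + 1) * G) ≤ κ ^ 2 * ρ ^ (t + 1) * κ :=
    (spec12_mul_le _ _).trans (mul_le_mul hF hG (spec12_nonneg G) (by positivity))
  simp only [← Matrix.mul_assoc]
  calc xiw12 ρ (t + 2) ^ 2 * xNormSq12 ρ (fun r => F ^ (t + 1) * G * Y r)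
      ≤ xiw12 ρ (t + 2) ^ 2 * (spec12 (F ^ (t + 1) * G) ^ 2 * xNormSq12 ρ Y) := by
        gcongr
        exact xNormSq12_mul_le hρ.le _ hY
    _ ≤ xiw12 ρ (t + 2) ^ 2 * ((κ ^ 2 * ρ ^ (t + 1) * κ) ^ 2 * xNormSq12 ρ Y) := by
        gcongr
        exact spec12_nonneg _
    _ = κ ^ 6 * ρ ^ (t + 2) * xNormSq12 ρ Y := by
        rw [xiw12_sq hρ.le, Nat.add_sub_cancel]
        field_simp
        ring
    _ ≤ κ ^ 8 * ρ ^ (t + 2) * (xiw12 ρ 0 ^ 2 * xNormSq12 ρ Y) := by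
        rw [show xiw12 ρ 0 = 1 by simp [xiw12], one_pow, one_mul]
        gcongr
        norm_num

lemma weighted_xNormSq12_pow_mul_le (hρ0 : 0 < ρ) (hρ1 : ρ ≤ 1) (hκ : 1 ≤ κ)
    {F : Matrix (Fin d) (Fin d) ℝ} {s : ℕ} (hF : spec12 (F ^ s) ≤ κ ^ 2 * ρ ^ s) (j : ℕ)
    (hY : Summable fun r : ℕ => (ρ ^ (r + 1))⁻¹ * frob12 (Y (r + 1)) ^ 2) :
    xiw12 ρ (s + j) ^ 2 * xNormSq12 ρ (fun r => F ^ s * Y r)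
      ≤ κ ^ 8 * ρ ^ s * (xiw12 ρ j ^ 2 * xNormSq12 ρ Y) := by
  have hX := xNormSq12_nonneg hρ0.le Y
  calc xiw12 ρ (s + j) ^ 2 * xNormSq12 ρ (fun r => F ^ s * Y r)
      ≤ xiw12 ρ (s + j) ^ 2 * (spec12 (F ^ s) ^ 2 * xNormSq12 ρ Y) := by
        gcongr
        exact xNormSq12_mul_le hρ0.le _ hY
    _ ≤ xiw12 ρ (s + j) ^ 2 * ((κ ^ 2 * ρ ^ s) ^ 2 * xNormSq12 ρ Y) := by
        gcongr
        exact spec12_nonneg _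
    _ = κ ^ 4 * ρ ^ s * (xiw12 ρ (j + s) ^ 2 * ρ ^ s) * xNormSq12 ρ Y := by
        rw [add_comm j]
        ring
    _ ≤ κ ^ 4 * ρ ^ s * xiw12 ρ j ^ 2 * xNormSq12 ρ Y := by
        gcongr
        exact xiw12_sq_add_mul_pow_le hρ0 hρ1 j s
    _ ≤ κ ^ 8 * ρ ^ s * (xiw12 ρ j ^ 2 * xNormSq12 ρ Y) := by
        rw [← mul_assoc]
        gcongr
        norm_num

end HistoryOperator

lemma add_tsum_le_mul_tsum {a c : ℝ} {b g : ℕ → ℝ} (hg : Summable g) (ha : a ≤ c * g 0)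
    (hb0 : ∀ k, 0 ≤ b k) (hb : ∀ k, b k ≤ c * g (k + 1)) :
    a + ∑' k, b k ≤ c * ∑' k, g k := by
  have hg' : Summable fun k => c * g (k + 1) := ((summable_nat_add_iff 1).2 hg).mul_left c
  rw [hg.tsum_eq_zero_add, mul_add, ← tsum_mul_left]
  exact add_le_add ha ((Summable.of_nonneg_of_le hb0 hb hg').tsum_le_tsum hb hg')

theorem stmt_12_general
    (d : ℕ) (κ ρ : ℝ) (hκ : 1 ≤ κ) (hρ : ρ ∈ Set.Ioo (0:ℝ) 1)
    (Ftil G : Matrix (Fin d) (Fin d) ℝ)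
    (hF : ∀ j : ℕ, spec12 (Ftil ^ j) ≤ κ ^ 2 * ρ ^ j)
    (hG : spec12 G ≤ κ)
    (s : ℕ) (hs : 2 ≤ s)
    (Y : ℕ → ℕ → Matrix (Fin d) (Fin d) ℝ)
    (hfin : ∀ k : ℕ, Summable fun r : ℕ => (ρ ^ (r + 1))⁻¹ * frob12 (Y k (r + 1)) ^ 2)
    (htot : Summable fun k : ℕ => xiw12 ρ k ^ 2 * xNormSq12 ρ (Y k)) :
    Real.sqrt
        (xiw12 ρ s ^ 2 * xNormSq12 ρ (fun r => Ftil ^ (s - 1) * (G * Y 0 r))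
          + ∑' k : ℕ, xiw12 ρ (s + k + 1) ^ 2 * xNormSq12 ρ (fun r => Ftil ^ s * Y (k + 1) r))
      ≤ κ ^ 4 * Real.sqrt (ρ ^ s) * Real.sqrt (∑' k : ℕ, xiw12 ρ k ^ 2 * xNormSq12 ρ (Y k)) := by
  obtain ⟨hρ0, hρ1⟩ := hρ
  have hsq : xiw12 ρ s ^ 2 * xNormSq12 ρ (fun r => Ftil ^ (s - 1) * (G * Y 0 r))
        + ∑' k : ℕ, xiw12 ρ (s + k + 1) ^ 2 * xNormSq12 ρ (fun r => Ftil ^ s * Y (k + 1) r)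
      ≤ κ ^ 8 * ρ ^ s * ∑' k : ℕ, xiw12 ρ k ^ 2 * xNormSq12 ρ (Y k) :=
    add_tsum_le_mul_tsum htot
      (weighted_xNormSq12_pow_mul_mul_le hρ0 hκ hs (hF _) hG (hfin 0))
      (fun k => mul_nonneg (sq_nonneg _) (xNormSq12_nonneg hρ0.le _))
      (fun k => weighted_xNormSq12_pow_mul_le hρ0 hρ1.le hκ (hF s) (k + 1) (hfin (k + 1)))
  calc _ ≤ Real.sqrt (κ ^ 8 * ρ ^ s * ∑' k : ℕ, xiw12 ρ k ^ 2 * xNormSq12 ρ (Y k)) :=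
        Real.sqrt_le_sqrt hsq
    _ = _ := by
        rw [Real.sqrt_mul (by positivity), Real.sqrt_mul (by positivity),
          show κ ^ 8 = (κ ^ 4) ^ 2 by ring, Real.sqrt_sq (by positivity)]

/-- operator norm bound `‖Aˢ‖ ≤ κ⁴ ρ^{s/2}` for the online linear control
history operator.  If `‖F̃ʲ‖₂ ≤ κ²ρʲ` and `‖G‖₂ ≤ κ`, then for `s ≥ 2` and structured
histories `Y_k = F̃^{k−1} G X_k` (`k ≥ 1`) of finite norm,
`(ξ_s² ‖F̃^{s−1} G Y_0‖_𝒳² + ∑_{k≥1} ξ_{s+k}² ‖F̃^s Y_k‖_𝒳²)^{1/2}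
  ≤ κ⁴ ρ^{s/2} (∑_{k≥0} ξ_k² ‖Y_k‖_𝒳²)^{1/2}`. -/
theorem stmt_12
    (d : ℕ) (hd : 1 ≤ d) (κ ρ : ℝ) (hκ : 1 ≤ κ) (hρ : ρ ∈ Set.Ioo (0:ℝ) 1)
    (Ftil G : Matrix (Fin d) (Fin d) ℝ)
    (hF : ∀ j : ℕ, spec12 (Ftil ^ j) ≤ κ ^ 2 * ρ ^ j)
    (hG : spec12 G ≤ κ)
    (s : ℕ) (hs : 2 ≤ s)
    (Y Xs : ℕ → ℕ → Matrix (Fin d) (Fin d) ℝ)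
    (hstruct : ∀ (k r : ℕ), Y (k + 1) r = Ftil ^ k * (G * Xs (k + 1) r))
    (hfin : ∀ k : ℕ, Summable fun r : ℕ => (ρ ^ (r + 1))⁻¹ * frob12 (Y k (r + 1)) ^ 2)
    (htot : Summable fun k : ℕ => xiw12 ρ k ^ 2 * xNormSq12 ρ (Y k)) :
    Real.sqrt
        (xiw12 ρ s ^ 2 * xNormSq12 ρ (fun r => Ftil ^ (s - 1) * (G * Y 0 r))
          + ∑' k : ℕ, xiw12 ρ (s + k + 1) ^ 2 * xNormSq12 ρ (fun r => Ftil ^ s * Y (k + 1) r))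
      ≤ κ ^ 4 * Real.sqrt (ρ ^ s) * Real.sqrt (∑' k : ℕ, xiw12 ρ k ^ 2 * xNormSq12 ρ (Y k)) :=
  stmt_12_general d κ ρ hκ hρ Ftil G hF hG s hs Y hfin htot
end
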